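/- An idempotent object in a symmetric monoidal category carries a commutative monoid structure: if ε : 𝟙 → C is such that the map ε ⊗ id_C : C → C ⊗ C is an isomorphism, then C admits a commutative monoid object structure whose unit is ε and whose multiplication is the inverse of ε ⊗ id_C (composed with appropriate unitors). -/

import Mathlib

open CategoryTheory MonoidalCategory

/-!
Write `l = (λ_ X).inv ≫ ε ▷ X` and `r = (ρ_ X).inv ≫ X ◁ ε`. Naturality of `Y ↦ (λ_ Y).inv ≫ ε ▷ Y`
applied to `l` itself, after cancelling the epimorphism `l`, gives `X ◁ l = l ▷ X ≫ α`; this is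
associativity of `μ = l⁻¹`, and the mirror argument gives `r ▷ X = X ◁ r ≫ α⁻¹` once `r` is
invertible. Since `r = l ≫ β`, the hexagon identity combined with these two equations forces
`β_ X X = 𝟙`, which is commutativity and, through `r = l`, right unitality.
-/

namespace CategoryTheory.MonoidalCategory

section Monoidal

variable {C : Type*} [Category C] [MonoidalCategory C] {X : C} (ε : 𝟙_ C ⟶ X)

def insertUnitLeft (Y : C) : Y ⟶ X ⊗ Y := (λ_ Y).inv ≫ ε ▷ Y

def insertUnitRight (Y : C) : Y ⟶ Y ⊗ X := (ρ_ Y).inv ≫ Y ◁ ε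

lemma insertUnitLeft_naturality {Y Z : C} (f : Y ⟶ Z) :
    f ≫ insertUnitLeft ε Z = insertUnitLeft ε Y ≫ X ◁ f := by
  rw [insertUnitLeft, insertUnitLeft, leftUnitor_inv_naturality_assoc, whisker_exchange,
    Category.assoc]

lemma insertUnitRight_naturality {Y Z : C} (f : Y ⟶ Z) :
    f ≫ insertUnitRight ε Z = insertUnitRight ε Y ≫ f ▷ X := by
  rw [insertUnitRight, insertUnitRight, rightUnitor_inv_naturality_assoc, ← whisker_exchange,
    Category.assoc]

lemma insertUnitLeft_tensor (Y Z : C) :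
    insertUnitLeft ε (Y ⊗ Z) = insertUnitLeft ε Y ▷ Z ≫ (α_ X Y Z).hom := by
  simp [insertUnitLeft]

lemma insertUnitRight_tensor (Y Z : C) :
    insertUnitRight ε (Y ⊗ Z) = Y ◁ insertUnitRight ε Z ≫ (α_ Y Z X).inv := by
  simp [insertUnitRight]

lemma whiskerLeft_insertUnitLeft [Epi (insertUnitLeft ε X)] :
    X ◁ insertUnitLeft ε X = insertUnitLeft ε X ▷ X ≫ (α_ X X X).hom := by
  rw [← cancel_epi (insertUnitLeft ε X), ← insertUnitLeft_naturality, insertUnitLeft_tensor]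

lemma whiskerRight_insertUnitRight [Epi (insertUnitRight ε X)] :
    insertUnitRight ε X ▷ X = X ◁ insertUnitRight ε X ≫ (α_ X X X).inv := by
  rw [← cancel_epi (insertUnitRight ε X), ← insertUnitRight_naturality, insertUnitRight_tensor]

end Monoidal

section Braided

variable {C : Type*} [Category C] [MonoidalCategory C] [BraidedCategory C] {X : C}
  (ε : 𝟙_ C ⟶ X)

lemma insertUnitLeft_braiding (Y : C) :
    insertUnitLeft ε Y ≫ (β_ X Y).hom = insertUnitRight ε Y := by
  rw [insertUnitLeft, insertUnitRight, Category.assoc, BraidedCategory.braiding_naturality_left,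
    leftUnitor_inv_braiding_assoc]

instance isIso_insertUnitRight (Y : C) [IsIso (insertUnitLeft ε Y)] :
    IsIso (insertUnitRight ε Y) := by
  rw [← insertUnitLeft_braiding]
  infer_instance

end Braided

section Symmetric

variable {C : Type*} [Category C] [MonoidalCategory C] [SymmetricCategory C] {X : C}
  (ε : 𝟙_ C ⟶ X)

lemma insertUnitRight_braiding (Y : C) :
    insertUnitRight ε Y ≫ (β_ Y X).hom = insertUnitLeft ε Y := by
  rw [← insertUnitLeft_braiding, Category.assoc, SymmetricCategory.symmetry, Category.comp_id]

lemma braiding_self_eq_id_of_isIso_insertUnitLeft [IsIso (insertUnitLeft ε X)] :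
    (β_ X X).hom = 𝟙 (X ⊗ X) := by
  rw [← cancel_mono (insertUnitLeft ε X ▷ X), Category.id_comp]
  calc (β_ X X).hom ≫ insertUnitLeft ε X ▷ X
      = X ◁ insertUnitLeft ε X ≫ (β_ X (X ⊗ X)).hom :=
        (BraidedCategory.braiding_naturality_right X _).symm
    _ = (insertUnitLeft ε X ≫ (β_ X X).hom) ▷ X ≫
          (α_ X X X).hom ≫ X ◁ (β_ X X).hom ≫ (α_ X X X).inv := by
        simp [whiskerLeft_insertUnitLeft ε, BraidedCategory.braiding_tensor_right_hom]
    _ = insertUnitRight ε X ▷ X ≫ (α_ X X X).hom ≫ X ◁ (β_ X X).hom ≫ (α_ X X X).inv := by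
        rw [insertUnitLeft_braiding]
    _ = X ◁ (insertUnitRight ε X ≫ (β_ X X).hom) ≫ (α_ X X X).inv := by
        simp [whiskerRight_insertUnitRight ε]
    _ = insertUnitLeft ε X ▷ X := by
        simp [insertUnitRight_braiding, whiskerLeft_insertUnitLeft ε]

lemma insertUnitRight_eq_insertUnitLeft [IsIso (insertUnitLeft ε X)] :
    insertUnitRight ε X = insertUnitLeft ε X := by
  rw [← insertUnitLeft_braiding, braiding_self_eq_id_of_isIso_insertUnitLeft ε, Category.comp_id]

end Symmetric

end CategoryTheory.MonoidalCategory

namespace CategoryTheory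

variable {C : Type*} [Category C] [MonoidalCategory C] [SymmetricCategory C] {X : C}
  (ε : 𝟙_ C ⟶ X)

noncomputable abbrev MonObj.ofIsIsoInsertUnitLeft [IsIso (insertUnitLeft ε X)] : MonObj X where
  one := ε
  mul := inv (insertUnitLeft ε X)
  one_mul := by simp [IsIso.comp_inv_eq, insertUnitLeft]
  mul_one := by simp [IsIso.comp_inv_eq, ← insertUnitRight_eq_insertUnitLeft ε, insertUnitRight]
  mul_assoc := by
    rw [← cancel_epi (insertUnitLeft ε X ▷ X), ← reassoc_of% whiskerLeft_insertUnitLeft ε]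
    simp

noncomputable def CommMon.ofIsIsoInsertUnitLeft [IsIso (insertUnitLeft ε X)] : CommMon C :=
  letI := MonObj.ofIsIsoInsertUnitLeft ε
  { X := X
    comm := ⟨by rw [braiding_self_eq_id_of_isIso_insertUnitLeft ε, Category.id_comp]⟩ }

end CategoryTheory

/-- An idempotent object in a symmetric monoidal category carries a commutative monoid
structure whose unit is `ε` and whose multiplication is the inverse of the isomorphism
`X ≅ 𝟙 ⊗ X ⟶ X ⊗ X` induced by `ε`. -/
theorem idempotent_commMon {C : Type*} [Category C] [MonoidalCategory C]
    [SymmetricCategory C] {X : C} (ε : 𝟙_ C ⟶ X)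
    (h : IsIso ((λ_ X).inv ≫ ε ▷ X)) :
    ∃ M : CommMon C, M.X = X ∧ HEq M.mon.one ε ∧
      HEq M.mon.mul (@inv _ _ _ _ ((λ_ X).inv ≫ ε ▷ X) h) := by
  have : IsIso (insertUnitLeft ε X) := h
  exact ⟨CommMon.ofIsIsoInsertUnitLeft ε, rfl, HEq.rfl, HEq.rfl⟩
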